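/- arXiv:1603.04641 — 11 statements merged into one kernel-verified Lean document; each statement's English description precedes it below -/
import Mathlib

section
/- Sequential composition of open games is well-defined on ∼-equivalence classes: if G ∼ G' and H ∼ H' then H ∘ G ∼ H' ∘ G'. -/
/-- An open game `(X,S) → (Y,R)`: a set of strategy profiles together with
play, coplay and best-response functions. -/
structure OpenGame (X S Y R : Type) : Type 1 where
  Strat : Type
  play : Strat → X → Y
  coplay : Strat → X → R → S
  best : X → (Y → R) → Strat → Strat → Prop

/-- The equivalence `∼` of open games: a bijection of strategy sets commuting with
play, coplay and best response. -/
def OpenGame.equivGame {X S Y R : Type} (G₁ G₂ : OpenGame X S Y R) : Prop :=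
  ∃ i : G₁.Strat ≃ G₂.Strat,
    (∀ σ x, G₁.play σ x = G₂.play (i σ) x) ∧
    (∀ σ x r, G₁.coplay σ x r = G₂.coplay (i σ) x r) ∧
    (∀ x k σ σ', G₁.best x k σ σ' ↔ G₂.best x k (i σ) (i σ'))

/-- Sequential composition of open games (diagrammatic order: `G.comp H = H ∘ G`). -/
def OpenGame.comp {X S Y R Z Q : Type} (G : OpenGame X S Y R) (H : OpenGame Y R Z Q) :
    OpenGame X S Z Q where
  Strat := G.Strat × H.Strat
  play p x := H.play p.2 (G.play p.1 x)
  coplay p x q := G.coplay p.1 x (H.coplay p.2 (G.play p.1 x) q)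
  best x k p p' :=
    G.best x (fun y => H.coplay p.2 y (k (H.play p.2 y))) p.1 p'.1 ∧
    H.best (G.play p.1 x) k p.2 p'.2

/-- The identity open game. -/
def OpenGame.idGame (X S : Type) : OpenGame X S X S where
  Strat := PUnit
  play _ x := x
  coplay _ _ s := s
  best _ _ _ _ := True

/-- The monoidal product of open games. -/
def OpenGame.tens {X₁ S₁ Y₁ R₁ X₂ S₂ Y₂ R₂ : Type}
    (G₁ : OpenGame X₁ S₁ Y₁ R₁) (G₂ : OpenGame X₂ S₂ Y₂ R₂) :
    OpenGame (X₁ × X₂) (S₁ × S₂) (Y₁ × Y₂) (R₁ × R₂) where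
  Strat := G₁.Strat × G₂.Strat
  play p x := (G₁.play p.1 x.1, G₂.play p.2 x.2)
  coplay p x r := (G₁.coplay p.1 x.1 r.1, G₂.coplay p.2 x.2 r.2)
  best x k p p' :=
    G₁.best x.1 (fun y₁ => (k (y₁, G₂.play p.2 x.2)).1) p.1 p'.1 ∧
    G₂.best x.2 (fun y₂ => (k (G₁.play p.1 x.1, y₂)).2) p.2 p'.2

/-- The strategically trivial open game determined by `f : X → Y` and `g : R → S`. -/
def OpenGame.lift {X S Y R : Type} (f : X → Y) (g : R → S) : OpenGame X S Y R where
  Strat := PUnit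
  play _ x := f x
  coplay _ _ r := g r
  best _ _ _ _ := True

/-- The counit open game `ε_X : (X,X) → (1,1)`. -/
def OpenGame.counit (X : Type) : OpenGame X X PUnit PUnit where
  Strat := PUnit
  play _ _ := PUnit.unit
  coplay _ x _ := x
  best _ _ _ _ := True

namespace OpenGame

variable {X S Y R Z Q : Type}

theorem equivGame.trans {G₁ G₂ G₃ : OpenGame X S Y R}
    (h₁₂ : G₁.equivGame G₂) (h₂₃ : G₂.equivGame G₃) : G₁.equivGame G₃ := by
  obtain ⟨i, hip, hic, hib⟩ := h₁₂
  obtain ⟨j, hjp, hjc, hjb⟩ := h₂₃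
  exact ⟨i.trans j, fun σ x => (hip σ x).trans (hjp _ x),
    fun σ x r => (hic σ x r).trans (hjc _ x r),
    fun x k σ σ' => (hib x k σ σ').trans (hjb x k _ _)⟩

theorem comp_congr_left {G G' : OpenGame X S Y R} (hG : G.equivGame G')
    (H : OpenGame Y R Z Q) : (G.comp H).equivGame (G'.comp H) := by
  obtain ⟨i, hip, hic, hib⟩ := hG
  refine ⟨i.prodCongr (Equiv.refl _), fun σ x => congrArg (H.play σ.2) (hip σ.1 x),
    fun σ x q => ?_, fun x k σ σ' => ?_⟩
  · change G.coplay σ.1 x (H.coplay σ.2 (G.play σ.1 x) q) =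
      G'.coplay (i σ.1) x (H.coplay σ.2 (G'.play (i σ.1) x) q)
    rw [hip, hic]
  · exact (hib x _ σ.1 σ'.1).and (iff_of_eq (congrArg (H.best · k σ.2 σ'.2) (hip σ.1 x)))

theorem comp_congr_right (G : OpenGame X S Y R) {H H' : OpenGame Y R Z Q}
    (hH : H.equivGame H') : (G.comp H).equivGame (G.comp H') := by
  obtain ⟨j, hjp, hjc, hjb⟩ := hH
  refine ⟨(Equiv.refl _).prodCongr j, fun σ x => hjp σ.2 _, fun σ x q => ?_,
    fun x k σ σ' => ?_⟩
  · exact congrArg (G.coplay σ.1 x) (hjc σ.2 _ q)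
  · have hk : (fun y => H.coplay σ.2 y (k (H.play σ.2 y))) =
        fun y => H'.coplay (j σ.2) y (k (H'.play (j σ.2) y)) := by
      funext y
      rw [hjp, hjc]
    exact (iff_of_eq (congrArg (G.best x · σ.1 σ'.1) hk)).and (hjb _ k σ.2 σ'.2)

end OpenGame

/-- sequential composition is well-defined on `∼`-classes. -/
theorem comp_well_defined {X S Y R Z Q : Type}
    (G G' : OpenGame X S Y R) (H H' : OpenGame Y R Z Q)
    (hG : G.equivGame G') (hH : H.equivGame H') :
    (G.comp H).equivGame (G'.comp H') :=
  (OpenGame.comp_congr_left hG H).trans (OpenGame.comp_congr_right G' hH)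
end

section
/- Composition of open games up to ∼-equivalence is associative: for composable open games G, H, I, we have I ∘ (H ∘ G) ∼ (I ∘ H) ∘ G. -/
/-- composition is associative up to `∼`.
In categorical notation `I ∘ (H ∘ G) ∼ (I ∘ H) ∘ G`. -/
theorem comp_assoc {X S Y R Z Q W V : Type}
    (G : OpenGame X S Y R) (H : OpenGame Y R Z Q) (I : OpenGame Z Q W V) :
    ((G.comp H).comp I).equivGame (G.comp (H.comp I)) :=
  -- Each component sees definitionally the same context on both sides, so best response
  -- differs only in how the three conjuncts are bracketed.
  ⟨Equiv.prodAssoc _ _ _, fun _ _ => rfl, fun _ _ _ => rfl, fun _ _ _ _ => and_assoc⟩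
end

section
/- The identity open game id_{(X,S)}, with singleton strategy set, play function P(*,x) = x, coplay C(*,x,s) = s, and best response relation always holding, is a two-sided identity for sequential composition of open games up to ∼-equivalence: for any open game G : (X,S) → (Y,R), G ∘ id_{(X,S)} ∼ G and id_{(Y,R)} ∘ G ∼ G. -/
namespace OpenGame

variable {X S Y R : Type}

theorem idGame_comp_equivGame (G : OpenGame X S Y R) : ((idGame X S).comp G).equivGame G :=
  ⟨Equiv.punitProd G.Strat, fun _ _ => rfl, fun _ _ _ => rfl,
    fun _ _ _ _ => and_iff_right trivial⟩

theorem comp_idGame_equivGame (G : OpenGame X S Y R) : (G.comp (idGame Y R)).equivGame G :=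
  ⟨Equiv.prodPUnit G.Strat, fun _ _ => rfl, fun _ _ _ => rfl,
    fun _ _ _ _ => and_iff_left trivial⟩

end OpenGame

/-- the identity open game is a two-sided identity up to `∼`:
`G ∘ id_{(X,S)} ∼ G` and `id_{(Y,R)} ∘ G ∼ G`. -/
theorem id_comp_id {X S Y R : Type} (G : OpenGame X S Y R) :
    ((OpenGame.idGame X S).comp G).equivGame G ∧
    (G.comp (OpenGame.idGame Y R)).equivGame G :=
  ⟨G.idGame_comp_equivGame, G.comp_idGame_equivGame⟩
end

section
/- The monoidal product ⊗ of open games is well-defined on ∼-equivalence classes: if G₁ ∼ G₁' and G₂ ∼ G₂' then G₁ ⊗ G₂ ∼ G₁' ⊗ G₂'. -/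
/-- the monoidal product is well-defined on `∼`-classes. -/
theorem tens_well_defined {X₁ S₁ Y₁ R₁ X₂ S₂ Y₂ R₂ : Type}
    (G₁ G₁' : OpenGame X₁ S₁ Y₁ R₁) (G₂ G₂' : OpenGame X₂ S₂ Y₂ R₂)
    (h₁ : G₁.equivGame G₁') (h₂ : G₂.equivGame G₂') :
    (G₁.tens G₂).equivGame (G₁'.tens G₂') := by
  obtain ⟨i₁, play₁, coplay₁, best₁⟩ := h₁
  obtain ⟨i₂, play₂, coplay₂, best₂⟩ := h₂
  refine ⟨i₁.prodCongr i₂, fun ⟨σ₁, σ₂⟩ x => ?_, fun ⟨σ₁, σ₂⟩ x r => ?_,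
    fun x k ⟨σ₁, σ₂⟩ ⟨σ₁', σ₂'⟩ => ?_⟩
  · exact Prod.ext (play₁ σ₁ x.1) (play₂ σ₂ x.2)
  · exact Prod.ext (coplay₁ σ₁ x.1 r.1) (coplay₂ σ₂ x.2 r.2)
  -- Each factor's context is read off the other factor's play, so the play equations
  -- are needed to match the contexts as well.
  · exact and_congr (by rw [best₁, play₂]; rfl) (by rw [best₂, play₁]; rfl)
end

section
/- The monoidal product of open games is a bifunctor up to ∼-equivalence: for composable open games G : (X,S) → (Y,R), H : (Y,R) → (Z,Q) and G' : (X',S') → (Y',R'), H' : (Y',R') → (Z',Q'), we have (H ∘ G) ⊗ (H' ∘ G') ∼ (H ⊗ H') ∘ (G ⊗ G'). -/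
/-- the monoidal product is a bifunctor up to `∼` (interchange law):
`(H ∘ G) ⊗ (H' ∘ G') ∼ (H ⊗ H') ∘ (G ⊗ G')`. -/
theorem tens_bifunctor {X S Y R Z Q X' S' Y' R' Z' Q' : Type}
    (G : OpenGame X S Y R) (H : OpenGame Y R Z Q)
    (G' : OpenGame X' S' Y' R') (H' : OpenGame Y' R' Z' Q') :
    ((G.comp H).tens (G'.comp H')).equivGame ((G.tens G').comp (H.tens H')) :=
  ⟨Equiv.prodProdProdComm _ _ _ _, fun _ _ => rfl, fun _ _ _ => rfl,
    -- both sides impose the same four best-response conditions, in definitionally equal contexts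
    fun _ _ _ _ => and_and_and_comm⟩
end

section
/- The assignment sending a pair of functions (f : X → Y, g : R → S) to the strategically trivial open game (f,g) : (X,S) → (Y,R) with play P(*,x) = f(x) and coplay C(*,x,r) = g(r), and best response always holding, defines a functor from Set × Set^op to the category of open games; that is, it preserves identities and composition up to ∼. -/
namespace OpenGame

theorem equivGame_refl {X S Y R : Type} (G : OpenGame X S Y R) : G.equivGame G :=
  ⟨Equiv.refl _, fun _ _ => rfl, fun _ _ _ => rfl, fun _ _ _ _ => Iff.rfl⟩

theorem lift_id_id (X S : Type) : lift (id : X → X) (id : S → S) = idGame X S := rfl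

theorem lift_comp_lift_equivGame {X S Y R Z Q : Type} (f : X → Y) (g : R → S) (f' : Y → Z)
    (g' : Q → R) : ((lift f g).comp (lift f' g')).equivGame (lift (f' ∘ f) (g ∘ g')) :=
  ⟨Equiv.punitProd PUnit, fun _ _ => rfl, fun _ _ _ => rfl, fun _ _ _ _ => and_self_iff⟩

end OpenGame

/-- `(f,g) : (X,S) → (Y,R)` defines a functor `Set × Set^op → Game`:
it preserves identities and composition up to `∼`. -/
theorem lift_functor :
    (∀ (X S : Type),
      (OpenGame.lift (id : X → X) (id : S → S)).equivGame (OpenGame.idGame X S)) ∧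
    (∀ (X S Y R Z Q : Type) (f : X → Y) (g : R → S) (f' : Y → Z) (g' : Q → R),
      ((OpenGame.lift f g).comp (OpenGame.lift f' g')).equivGame
        (OpenGame.lift (f' ∘ f) (g ∘ g'))) := by
  exact ⟨fun X S => OpenGame.lift_id_id X S ▸ OpenGame.equivGame_refl _,
    fun _ _ _ _ _ _ => OpenGame.lift_comp_lift_equivGame⟩
end

section
/- Counit law: for any function f : X → Y, the composite ε_Y ∘ ((f,id₁) ⊗ id_{(1,Y)}) of open games (X,Y) → (Y,Y) → (1,1) is ∼-equivalent to the composite ε_X ∘ (id_{(X,1)} ⊗ (id₁,f)) of open games (X,Y) → (X,X) → (1,1). -/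
theorem OpenGame.equivGame_refl_s8 {X S Y R : Type} (G : OpenGame X S Y R) : G.equivGame G :=
  ⟨Equiv.refl _, fun _ _ => rfl, fun _ _ _ => rfl, fun _ _ _ _ => Iff.rfl⟩

/-- the counit law.  Identifying `(X,Y)` with `(X,1) ⊗ (1,Y)` via the
implicit monoidal structure isomorphisms, `(f,id₁) ⊗ id_{(1,Y)} : (X,Y) → (Y,Y)`
is the strategically trivial game with play `f` and coplay `id`, and
`id_{(X,1)} ⊗ (id₁,f) : (X,Y) → (X,X)` is the one with play `id` and coplay `f`.
Then `ε_Y ∘ ((f,id₁) ⊗ id_{(1,Y)}) ∼ ε_X ∘ (id_{(X,1)} ⊗ (id₁,f))`. -/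
theorem counit_law (X Y : Type) (f : X → Y) :
    ((OpenGame.lift f (id : Y → Y)).comp (OpenGame.counit Y)).equivGame
      ((OpenGame.lift (id : X → X) f).comp (OpenGame.counit X)) :=
  -- Both composites unfold to the same game: strategies `PUnit × PUnit`, trivial play,
  -- coplay `x ↦ f x`, and every strategy a best response.
  OpenGame.equivGame_refl_s8 _
end

section
/- For two players: the monoidal product D_{1,X₁} ⊗ D_{1,X₂} of two utility-maximising decisions, composed with the lifted outcome function and counit to form the scalar open game ε_{ℝ²} ∘ ((q,1) ⊗ id_{(1,ℝ²)}) ∘ (D_{1,X₁} ⊗ D_{1,X₂}), has best response relation B(*,*) satisfying: ((σ₁,σ₂),(σ₁',σ₂')) ∈ B(*,*) iff σ₁' maximises x ↦ (q(x,σ₂))₁ over X₁ and σ₂' maximises y ↦ (q(σ₁,y))₂ over X₂; hence its fixpoints are exactly the pure Nash equilibria of the 2-player normal-form game q : X₁ × X₂ → ℝ². -/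
/-- The utility-maximising decision `D_{1,X} : (1,1) → (X,ℝ)`. -/
def decision1 (X : Type) : OpenGame PUnit PUnit X ℝ where
  Strat := X
  play σ _ := σ
  coplay _ _ _ := PUnit.unit
  best _ k _ σ' := ∀ x, k x ≤ k σ'

/-- The scalar open game `ε_{ℝ²} ∘ ((q,1) ⊗ id_{(1,ℝ²)}) ∘ (D_{1,X₁} ⊗ D_{1,X₂})`. -/
def twoPlayerGame {X₁ X₂ : Type} (q : X₁ × X₂ → ℝ × ℝ) :
    OpenGame (PUnit × PUnit) (PUnit × PUnit) PUnit PUnit :=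
  (((decision1 X₁).tens (decision1 X₂)).comp
    (OpenGame.lift q (id : ℝ × ℝ → ℝ × ℝ))).comp (OpenGame.counit (ℝ × ℝ))

/-! Lifted games and the counit have trivial best-response relations, so the best response of
the composite is that of `D_{1,X₁} ⊗ D_{1,X₂}` against the continuation `q` itself. In the
monoidal product each player answers the other's current move, which gives the two
argmax conditions. -/

namespace OpenGame

variable {X S Y R Z Q : Type}

theorem comp_lift_best_iff (G : OpenGame X S Y R) (f : Y → Z) (g : Q → R) (x : X)
    (k : Z → Q) (p p' : (G.comp (lift f g)).Strat) :
    (G.comp (lift f g)).best x k p p' ↔ G.best x (fun y => g (k (f y))) p.1 p'.1 :=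
  and_iff_left trivial

theorem comp_counit_best_iff (G : OpenGame X S Y Y) (x : X) (k : PUnit → PUnit)
    (p p' : (G.comp (counit Y)).Strat) :
    (G.comp (counit Y)).best x k p p' ↔ G.best x id p.1 p'.1 :=
  and_iff_left trivial

end OpenGame

theorem decision1_tens_best_iff {X₁ X₂ : Type} (x : PUnit × PUnit) (k : X₁ × X₂ → ℝ × ℝ)
    (σ σ' : ((decision1 X₁).tens (decision1 X₂)).Strat) :
    ((decision1 X₁).tens (decision1 X₂)).best x k σ σ' ↔
      (∀ a, (k (a, σ.2)).1 ≤ (k (σ'.1, σ.2)).1) ∧ (∀ b, (k (σ.1, b)).2 ≤ (k (σ.1, σ'.2)).2) :=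
  Iff.rfl

theorem twoPlayerGame_best_response_general (X₁ X₂ : Type)
    (q : X₁ × X₂ → ℝ × ℝ) :
    (∀ (x : PUnit × PUnit) (k : PUnit → PUnit)
      (σ σ' : (twoPlayerGame q).Strat),
      (twoPlayerGame q).best x k σ σ' ↔
        ((∀ a : X₁, (q (a, σ.1.1.2)).1 ≤ (q (σ'.1.1.1, σ.1.1.2)).1) ∧
         (∀ b : X₂, (q (σ.1.1.1, b)).2 ≤ (q (σ.1.1.1, σ'.1.1.2)).2))) ∧
    (∀ (x : PUnit × PUnit) (k : PUnit → PUnit) (σ : (twoPlayerGame q).Strat),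
      (twoPlayerGame q).best x k σ σ ↔
        ((∀ a : X₁, (q (a, σ.1.1.2)).1 ≤ (q (σ.1.1.1, σ.1.1.2)).1) ∧
         (∀ b : X₂, (q (σ.1.1.1, b)).2 ≤ (q (σ.1.1.1, σ.1.1.2)).2))) := by
  have best_iff := fun x k (σ σ' : (twoPlayerGame q).Strat) =>
    (OpenGame.comp_counit_best_iff _ x k σ σ').trans <|
      (OpenGame.comp_lift_best_iff _ q id x id σ.1 σ'.1).trans <|
        decision1_tens_best_iff x q σ.1.1 σ'.1.1
  exact ⟨best_iff, fun x k σ => best_iff x k σ σ⟩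

/-- the best response relation of the scalar open game built from
two decisions, the lifted outcome function `q` and the counit is exactly the
classical best response relation of the 2-player normal-form game `q`, and its
fixpoints are the pure Nash equilibria. -/
theorem twoPlayerGame_best_response (X₁ X₂ : Type)
    [Fintype X₁] [Nonempty X₁] [Fintype X₂] [Nonempty X₂]
    (q : X₁ × X₂ → ℝ × ℝ) :
    (∀ (x : PUnit × PUnit) (k : PUnit → PUnit)
      (σ σ' : (twoPlayerGame q).Strat),
      (twoPlayerGame q).best x k σ σ' ↔
        ((∀ a : X₁, (q (a, σ.1.1.2)).1 ≤ (q (σ'.1.1.1, σ.1.1.2)).1) ∧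
         (∀ b : X₂, (q (σ.1.1.1, b)).2 ≤ (q (σ.1.1.1, σ'.1.1.2)).2))) ∧
    (∀ (x : PUnit × PUnit) (k : PUnit → PUnit) (σ : (twoPlayerGame q).Strat),
      (twoPlayerGame q).best x k σ σ ↔
        ((∀ a : X₁, (q (a, σ.1.1.2)).1 ≤ (q (σ.1.1.1, σ.1.1.2)).1) ∧
         (∀ b : X₂, (q (σ.1.1.1, b)).2 ≤ (q (σ.1.1.1, σ.1.1.2)).2))) :=
  twoPlayerGame_best_response_general X₁ X₂ q
end

section
/- The open game D^Δ_{X,Y} := (id_{(X,1)} ⊗ D_{X,Y}) ∘ (Δ_X, 1) : (X,1) → (X × Y, ℝ) is, up to ∼-equivalence, given by: strategy set X → Y, play P(σ,x) = (x, σ(x)), trivial coplay, and (σ,σ') ∈ B(x,k) iff σ'(x) ∈ argmax_{y:Y} k(x,y). -/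
/-- The utility-maximising decision `D_{X,Y} : (X,1) → (Y,ℝ)`. -/
def decision (X Y : Type) : OpenGame X PUnit Y ℝ where
  Strat := X → Y
  play σ x := σ x
  coplay _ _ _ := PUnit.unit
  best x k _ σ' := ∀ y, k y ≤ k (σ' x)

/-- `D^Δ_{X,Y} = (id_{(X,1)} ⊗ D_{X,Y}) ∘ (Δ_X, 1) : (X,1) → (X × Y, ℝ)`
(with the implicit unitor `1 ⊗ ℝ ≅ ℝ` realised by a lifted function). -/
def decisionDelta (X Y : Type) : OpenGame X PUnit (X × Y) ℝ :=
  ((OpenGame.lift (fun x : X => (x, x)) (fun _ : PUnit × PUnit => PUnit.unit)).comp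
    ((OpenGame.idGame X PUnit).tens (decision X Y))).comp
    (OpenGame.lift (id : X × Y → X × Y) (fun r : ℝ => (PUnit.unit, r)))

/-- The explicit description of `D^Δ_{X,Y}`: strategies `X → Y`, play
`σ, x ↦ (x, σ x)`, trivial coplay, and `(σ,σ') ∈ B(x,k)` iff
`σ' x ∈ argmax_{y} k(x,y)`. -/
def decisionDeltaExplicit (X Y : Type) : OpenGame X PUnit (X × Y) ℝ where
  Strat := X → Y
  play σ x := (x, σ x)
  coplay _ _ _ := PUnit.unit
  best x k _ σ' := ∀ y : Y, k (x, y) ≤ k (x, σ' x)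

def decisionDeltaStratEquiv (X Y : Type) : (decisionDelta X Y).Strat ≃ (X → Y) :=
  (Equiv.prodPUnit _).trans ((Equiv.punitProd _).trans (Equiv.punitProd _))

theorem decisionDelta_best_iff {X Y : Type} (x : X) (k : X × Y → ℝ)
    (p p' : (decisionDelta X Y).Strat) :
    (decisionDelta X Y).best x k p p' ↔
      ∀ y : Y, k (x, y) ≤ k (x, decisionDeltaStratEquiv X Y p' x) := by
  simp only [decisionDelta, OpenGame.comp, OpenGame.tens, OpenGame.lift, OpenGame.idGame,
    decision, true_and, and_true]
  rfl

theorem decisionDelta_eq_explicit_general (X Y : Type) :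
    (decisionDelta X Y).equivGame (decisionDeltaExplicit X Y) :=
  ⟨decisionDeltaStratEquiv X Y, fun _ _ => rfl, fun _ _ _ => rfl,
    decisionDelta_best_iff⟩

/-- `D^Δ_{X,Y}` is, up to `∼`, the explicitly described open game. -/
theorem decisionDelta_eq_explicit (X Y : Type) [Fintype Y] [Nonempty Y] :
    (decisionDelta X Y).equivGame (decisionDeltaExplicit X Y) :=
  decisionDelta_eq_explicit_general X Y
end

section
/- Two-player sequential game as an open game: the scalar open game obtained by composing D_{1,X}, the copying map, D_{X,Y}, the lifted outcome function q : X × Y → ℝ², and the counit ε_{ℝ²}, has strategy set X × (X → Y), and ((σ₁,σ₂),(σ₁',σ₂')) ∈ B(*,*) iff σ₁' ∈ argmax_{x:X} (q(x, σ₂(x)))₁ and σ₂'(σ₁) ∈ argmax_{y:Y} (q(σ₁, y))₂. In particular, its fixpoints are exactly the Nash equilibria of the 2-stage sequential game with outcome function q. -/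
/-- The scalar open game of the 2-player sequential game: compose `D_{1,X}`, the
copying map, `id_{(X,ℝ)} ⊗ D_{X,Y}`, the lifted outcome function `q` and the
counit `ε_{ℝ²}` (implicit unitors realised by lifted functions). -/
def seq2Game {X Y : Type} (q : X × Y → ℝ × ℝ) :
    OpenGame PUnit PUnit PUnit PUnit :=
  ((((decision1 X).comp
      (OpenGame.lift (fun x : X => (x, x)) (fun p : ℝ × PUnit => p.1))).comp
      ((OpenGame.idGame X ℝ).tens (decision X Y))).comp
      (OpenGame.lift q (id : ℝ × ℝ → ℝ × ℝ))).comp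
    (OpenGame.counit (ℝ × ℝ))

/-- Nash equilibrium of the 2-stage sequential game: `σ₁` maximises
`x ↦ (q(x,σ₂ x))₁` and `σ₂ σ₁` maximises `y ↦ (q(σ₁,y))₂`. -/
def seq2Nash {X Y : Type} (q : X × Y → ℝ × ℝ) (s₁ : X) (s₂ : X → Y) : Prop :=
  (∀ a : X, (q (a, s₂ a)).1 ≤ (q (s₁, s₂ s₁)).1) ∧
  (∀ y : Y, (q (s₁, y)).2 ≤ (q (s₁, s₂ s₁)).2)

/-! Lifted functions, identities and counits have a single strategy and an always-true best
response, so in a composite they only reshape the continuation. The best response of the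
sequential game therefore reduces to that of `D_{1,X}` against `x ↦ (q (x, σ₂ x)).1` and that of
`D_{X,Y}` at the first player's move `σ₁` against `y ↦ (q (σ₁, y)).2`. -/

namespace OpenGame

variable {X S Y R Z Q : Type}

theorem best_comp_lift_iff (G : OpenGame X S Y R) (f : Y → Z) (g : Q → R) {x : X}
    {k : Z → Q} {p p' : (G.comp (lift f g)).Strat} :
    (G.comp (lift f g)).best x k p p' ↔ G.best x (fun y => g (k (f y))) p.1 p'.1 :=
  and_iff_left trivial

theorem best_comp_counit_iff (G : OpenGame X S Y Y) {x : X} {k : PUnit → PUnit}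
    {p p' : (G.comp (counit Y)).Strat} :
    (G.comp (counit Y)).best x k p p' ↔ G.best x id p.1 p'.1 :=
  and_iff_left trivial

theorem best_idGame_tens_iff {X₂ S₂ Y₂ R₂ : Type} (G : OpenGame X₂ S₂ Y₂ R₂)
    {x : X × X₂} {k : X × Y₂ → S × R₂} {p p' : ((idGame X S).tens G).Strat} :
    ((idGame X S).tens G).best x k p p' ↔ G.best x.2 (fun y => (k (x.1, y)).2) p.2 p'.2 :=
  and_iff_right trivial

end OpenGame

open OpenGame

def seq2GameStratEquiv {X Y : Type} (q : X × Y → ℝ × ℝ) : (seq2Game q).Strat ≃ X × (X → Y) where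
  toFun σ := (σ.1.1.1.1, σ.1.1.2.2)
  invFun s := ((((s.1, .unit), (.unit, s.2)), .unit), .unit)
  left_inv _ := rfl
  right_inv _ := rfl

theorem seq2Game_best_iff {X Y : Type} (q : X × Y → ℝ × ℝ) (x : PUnit) (k : PUnit → PUnit)
    (σ σ' : (seq2Game q).Strat) :
    (seq2Game q).best x k σ σ' ↔
      (∀ a : X, (q (a, σ.1.1.2.2 a)).1 ≤ (q (σ'.1.1.1.1, σ.1.1.2.2 σ'.1.1.1.1)).1) ∧
      (∀ y : Y, (q (σ.1.1.1.1, y)).2 ≤ (q (σ.1.1.1.1, σ'.1.1.2.2 σ.1.1.1.1)).2) :=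
  (best_comp_counit_iff _).trans <| (best_comp_lift_iff ..).trans <|
    and_congr (best_comp_lift_iff ..) (best_idGame_tens_iff ..)

theorem seq2Game_best_response_general (X Y : Type)
    (q : X × Y → ℝ × ℝ) :
    Nonempty ((seq2Game q).Strat ≃ X × (X → Y)) ∧
    (∀ (x : PUnit) (k : PUnit → PUnit) (σ σ' : (seq2Game q).Strat),
      (seq2Game q).best x k σ σ' ↔
        ((∀ a : X, (q (a, σ.1.1.2.2 a)).1 ≤
            (q (σ'.1.1.1.1, σ.1.1.2.2 σ'.1.1.1.1)).1) ∧
         (∀ y : Y, (q (σ.1.1.1.1, y)).2 ≤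
            (q (σ.1.1.1.1, σ'.1.1.2.2 σ.1.1.1.1)).2))) ∧
    (∀ (x : PUnit) (k : PUnit → PUnit) (σ : (seq2Game q).Strat),
      (seq2Game q).best x k σ σ ↔ seq2Nash q σ.1.1.1.1 σ.1.1.2.2) :=
  ⟨⟨seq2GameStratEquiv q⟩, seq2Game_best_iff q, fun x k σ => seq2Game_best_iff q x k σ σ⟩

/-- the 2-player sequential scalar open game has strategy set
`X × (X → Y)` (up to bijection), its best response relation is the classical one
of the sequential game, and its fixpoints are exactly the Nash equilibria. -/
theorem seq2Game_best_response (X Y : Type)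
    [Fintype X] [Nonempty X] [Fintype Y] [Nonempty Y]
    (q : X × Y → ℝ × ℝ) :
    Nonempty ((seq2Game q).Strat ≃ X × (X → Y)) ∧
    (∀ (x : PUnit) (k : PUnit → PUnit) (σ σ' : (seq2Game q).Strat),
      (seq2Game q).best x k σ σ' ↔
        ((∀ a : X, (q (a, σ.1.1.2.2 a)).1 ≤
            (q (σ'.1.1.1.1, σ.1.1.2.2 σ'.1.1.1.1)).1) ∧
         (∀ y : Y, (q (σ.1.1.1.1, y)).2 ≤
            (q (σ.1.1.1.1, σ'.1.1.2.2 σ.1.1.1.1)).2))) ∧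
    (∀ (x : PUnit) (k : PUnit → PUnit) (σ : (seq2Game q).Strat),
      (seq2Game q).best x k σ σ ↔ seq2Nash q σ.1.1.1.1 σ.1.1.2.2) :=
  seq2Game_best_response_general X Y q
end

section
/- For the sequence of open games G_i : (1,1) → (∏_{j≤i} X_j, ℝ^i) defined recursively from decisions D_{∏_{j≤i} X_j, X_{i+1}} with copying and identity wires, the strategy set of G_n is ∏_{i=1}^n (∏_{j<i} X_j → X_i), the set of strategy profiles of the n-player sequential game, and for any q : ∏_{i=1}^n X_i → ℝⁿ, the relation B_{G_n}(*, q) is exactly the classical best response relation of the sequential game: (σ,σ') ∈ B_{G_n}(*,q) iff for each i, (P(σ[i ↦ σ'_i]))_i ∈ argmax_{x_i} (q(U_i(x_i,σ)))_i, where P is the play function producing the realized move sequence and U_i the unilateral deviation operator. -/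
variable {n : ℕ}

/-- The recursively defined sequence of open games
`G_i : (1,1) → (∏_{j≤i} X_j, ℝ^i)` of Definition 7 (Figure 4): `G_0` is the
identity on `(1,1)`, and `G_{i+1}` is obtained from `G_i` by copying its output,
feeding one copy to the decision `D_{∏_{j≤i} X_j, X_{i+1}}` (best response via
argmax of the continuation), and bundling the output and utility wires. -/
def seqGame (X : Fin n → Type) :
    ∀ (i : ℕ) (hi : i ≤ n),
      OpenGame PUnit PUnit ((j : Fin i) → X (Fin.castLE hi j)) (Fin i → ℝ)
  | 0, _ =>
    { Strat := PUnit
      play := fun _ _ => fun j => j.elim0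
      coplay := fun _ _ _ => PUnit.unit
      best := fun _ _ _ _ => True }
  | (i + 1), hi =>
    let G := seqGame X i (Nat.le_of_succ_le hi)
    { Strat := G.Strat ×
        (((j : Fin i) → X (Fin.castLE (Nat.le_of_succ_le hi) j)) → X ⟨i, hi⟩)
      play := fun p _ =>
        Fin.snoc (α := fun j : Fin (i + 1) => X (Fin.castLE hi j))
          (G.play p.1 PUnit.unit) (p.2 (G.play p.1 PUnit.unit))
      coplay := fun _ _ _ => PUnit.unit
      best := fun _ k p p' =>
        G.best PUnit.unit
          (fun h j => k
            (Fin.snoc (α := fun j : Fin (i + 1) => X (Fin.castLE hi j)) h (p.2 h))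
            (Fin.castSucc j))
          p.1 p'.1 ∧
        (∀ x : X ⟨i, hi⟩,
          k (Fin.snoc (α := fun j : Fin (i + 1) => X (Fin.castLE hi j))
              (G.play p.1 PUnit.unit) x) (Fin.last i) ≤
          k (Fin.snoc (α := fun j : Fin (i + 1) => X (Fin.castLE hi j))
              (G.play p.1 PUnit.unit) (p'.2 (G.play p.1 PUnit.unit)))
            (Fin.last i)) }

/-- Classical strategy profiles of the `n`-player sequential game: each player `i`
chooses a move contingent on the history of previous moves. -/
def SeqStrat (X : Fin n → Type) : Type :=
  ∀ i : Fin n, (((j : Fin i.val) → X (Fin.castLE (le_of_lt i.isLt) j)) → X i)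

/-- The play function by course-of-values recursion (auxiliary version producing
the realized moves of the first `i` players). -/
def playAux (X : Fin n → Type) (σ : SeqStrat X) :
    ∀ (i : ℕ) (hi : i ≤ n), (j : Fin i) → X (Fin.castLE hi j)
  | 0, _ => fun j => j.elim0
  | (i + 1), hi =>
    Fin.snoc (α := fun j : Fin (i + 1) => X (Fin.castLE hi j))
      (playAux X σ i (Nat.le_of_succ_le hi))
      (σ ⟨i, hi⟩ (playAux X σ i (Nat.le_of_succ_le hi)))

/-- The play function `P : Σ → ∏_{i} X_i` producing the realized move sequence. -/
def playSeq (X : Fin n → Type) (σ : SeqStrat X) : (j : Fin n) → X j :=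
  fun j => playAux X σ n le_rfl j

/-- The unilateral deviation operator `U_i : X_i × Σ → ∏_j X_j`: players before
`i` follow `σ`, player `i` plays `x`, players after `i` follow `σ` applied to the
realized history. -/
def udev (X : Fin n → Type) [DecidableEq (Fin n)] (i : Fin n) (x : X i)
    (σ : SeqStrat X) : (j : Fin n) → X j :=
  playSeq X (Function.update σ i (fun _ => x))

/-- The classical best response relation of the `n`-player sequential game with
outcome function `q`. -/
def seqBR (X : Fin n → Type) [DecidableEq (Fin n)]
    (q : ((j : Fin n) → X j) → Fin n → ℝ) (σ σ' : SeqStrat X) : Prop :=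
  ∀ i : Fin n, ∀ x : X i,
    (q (udev X i x σ)) i ≤
    (q (udev X i ((playSeq X (Function.update σ i (σ' i))) i) σ)) i

/-! A strategy of `G_{i+1}` is a strategy of `G_i` together with a move of player `i+1`
as a function of the history, so unfolding the recursion identifies strategies of `G_n`
with classical profiles, and `G_n` then plays exactly the realized sequence `P σ`.
The best-response condition of `G_{i+1}` is that of `G_i` against the continuation in which
player `i+1` follows `σ`, together with optimality of `σ'_{i+1}` for player `i+1` at the
history realized by `σ`. By induction it says that for every player `j`, deviating at the
history realized by `σ` (later players following `σ`) cannot beat `σ'_j`'s move there,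
which is the classical condition since `P(σ[j ↦ σ'_j])_j` is exactly that move. -/

section SeqGame

variable (X : Fin n → Type)

def seqGameStratEquiv : ∀ (i : ℕ) (hi : i ≤ n),
    (seqGame X i hi).Strat ≃
      ∀ j : Fin i, ((k : Fin j.val) → X (Fin.castLE (j.isLt.le.trans hi) k)) →
        X (Fin.castLE hi j)
  | 0, _ => Equiv.ofUnique PUnit _
  | i + 1, hi =>
    ((seqGameStratEquiv i (Nat.le_of_succ_le hi)).prodCongr (Equiv.refl _)).trans <|
      (Equiv.prodComm _ _).trans <| Fin.snocEquiv fun j : Fin (i + 1) =>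
        ((k : Fin j.val) → X (Fin.castLE (j.isLt.le.trans hi) k)) → X (Fin.castLE hi j)

def seqGameStrat (σ : SeqStrat X) (i : ℕ) (hi : i ≤ n) : (seqGame X i hi).Strat :=
  (seqGameStratEquiv X i hi).symm fun j => σ (Fin.castLE hi j)

theorem seqGameStrat_succ (σ : SeqStrat X) (i : ℕ) (hi : i + 1 ≤ n) :
    seqGameStrat X σ (i + 1) hi = (seqGameStrat X σ i (Nat.le_of_succ_le hi), σ ⟨i, hi⟩) :=
  rfl

theorem playAux_congr {σ₁ σ₂ : SeqStrat X} :
    ∀ (i : ℕ) (hi : i ≤ n), (∀ j : Fin n, j.val < i → σ₁ j = σ₂ j) →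
      playAux X σ₁ i hi = playAux X σ₂ i hi
  | 0, _, _ => funext fun j => j.elim0
  | i + 1, hi, h => by
    simp only [playAux, playAux_congr i (Nat.le_of_succ_le hi) fun j hj => h j (by omega),
      h ⟨i, hi⟩ (Nat.lt_succ_self i)]

theorem playAux_update_of_le (σ : SeqStrat X) {j : Fin n} (f) {i : ℕ} (hi : i ≤ n)
    (hij : i ≤ j.val) : playAux X (Function.update σ j f) i hi = playAux X σ i hi :=
  playAux_congr X i hi fun _ hl => Function.update_of_ne (Fin.ne_of_val_ne (by omega)) _ _

theorem playAux_succ_update_of_lt (σ : SeqStrat X) {j : Fin n} (f) {i : ℕ} (hi : i + 1 ≤ n)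
    (hji : j.val < i) :
    playAux X (Function.update σ j f) (i + 1) hi =
      Fin.snoc (α := fun l : Fin (i + 1) => X (Fin.castLE hi l))
        (playAux X (Function.update σ j f) i (Nat.le_of_succ_le hi))
        (σ ⟨i, hi⟩ (playAux X (Function.update σ j f) i (Nat.le_of_succ_le hi))) := by
  -- `SeqStrat` is a plain `def`: unfolding it in the type of `σ` lets `rw` see through
  -- `Function.update σ`.
  unfold SeqStrat at σ
  show Fin.snoc (α := fun l : Fin (i + 1) => X (Fin.castLE hi l)) _ _ = _
  rw [Function.update_of_ne (Fin.ne_of_val_ne (by simp; omega))]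

theorem playAux_succ_update_self (σ : SeqStrat X) {i : ℕ} (hi : i + 1 ≤ n) (f) :
    playAux X (Function.update σ (Fin.castLE hi (Fin.last i)) f) (i + 1) hi =
      Fin.snoc (α := fun l : Fin (i + 1) => X (Fin.castLE hi l))
        (playAux X σ i (Nat.le_of_succ_le hi)) (f (playAux X σ i (Nat.le_of_succ_le hi))) := by
  show Fin.snoc (α := fun l : Fin (i + 1) => X (Fin.castLE hi l)) _ _ = _
  rw [playAux_update_of_le X σ f (Nat.le_of_succ_le hi) le_rfl]
  exact congrArg (fun g => Fin.snoc (α := fun l : Fin (i + 1) => X (Fin.castLE hi l))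
      (playAux X σ i (Nat.le_of_succ_le hi)) (g (playAux X σ i (Nat.le_of_succ_le hi))))
    (Function.update_self (Fin.castLE hi (Fin.last i)) f σ)

theorem playAux_apply (σ : SeqStrat X) :
    ∀ (i : ℕ) (hi : i ≤ n) (j : Fin i),
      playAux X σ i hi j = σ (Fin.castLE hi j) (playAux X σ j (j.isLt.le.trans hi))
  | 0, _, j => j.elim0
  | i + 1, hi, j => by
    induction j using Fin.lastCases with
    | last => simp only [playAux, Fin.snoc_last]; rfl
    | cast j =>
      simp only [playAux, Fin.snoc_castSucc]
      exact playAux_apply σ i (Nat.le_of_succ_le hi) j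

theorem playSeq_update_self (σ : SeqStrat X) (i : Fin n) (f) :
    playSeq X (Function.update σ i f) i = f (playAux X σ i i.isLt.le) := by
  refine (playAux_apply X _ n le_rfl i).trans ?_
  rw [playAux_update_of_le X σ f _ le_rfl]
  exact congrFun (Function.update_self i f σ) _

theorem seqGame_play_seqGameStrat (σ : SeqStrat X) :
    ∀ (i : ℕ) (hi : i ≤ n),
      (seqGame X i hi).play (seqGameStrat X σ i hi) PUnit.unit = playAux X σ i hi
  | 0, _ => funext fun j => j.elim0
  | i + 1, hi => by
    rw [seqGameStrat_succ]
    show Fin.snoc (α := fun j : Fin (i + 1) => X (Fin.castLE hi j)) _ _ = _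
    rw [seqGame_play_seqGameStrat σ i (Nat.le_of_succ_le hi)]
    rfl

theorem seqGame_best_seqGameStrat_iff (σ σ' : SeqStrat X) :
    ∀ (i : ℕ) (hi : i ≤ n) (k : ((j : Fin i) → X (Fin.castLE hi j)) → Fin i → ℝ),
      (seqGame X i hi).best PUnit.unit k (seqGameStrat X σ i hi) (seqGameStrat X σ' i hi) ↔
        ∀ (j : Fin i) (x : X (Fin.castLE hi j)),
          k (playAux X (Function.update σ (Fin.castLE hi j) fun _ => x) i hi) j ≤
            k (playAux X (Function.update σ (Fin.castLE hi j) fun _ =>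
              σ' (Fin.castLE hi j) (playAux X σ j (j.isLt.le.trans hi))) i hi) j
  | 0, _, _ => iff_of_true trivial fun j => j.elim0
  | i + 1, hi, k => by
    rw [Fin.forall_fin_succ', seqGameStrat_succ, seqGameStrat_succ]
    refine and_congr ((seqGame_best_seqGameStrat_iff σ σ' i (Nat.le_of_succ_le hi) _).trans
      (forall_congr' fun j => forall_congr' fun x => ?_)) (forall_congr' fun x => ?_)
    · rw [playAux_succ_update_of_lt X σ _ hi j.isLt, playAux_succ_update_of_lt X σ _ hi j.isLt]
      rfl
    · dsimp only
      rw [seqGame_play_seqGameStrat, playAux_succ_update_self X σ hi,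
        playAux_succ_update_self X σ hi]
      rfl

end SeqGame

theorem seqGame_best_response_general (X : Fin n → Type)
    (q : ((j : Fin n) → X j) → Fin n → ℝ) :
    ∃ e : (seqGame X n le_rfl).Strat ≃ SeqStrat X,
      (∀ σ : (seqGame X n le_rfl).Strat,
        (seqGame X n le_rfl).play σ PUnit.unit = playSeq X (e σ)) ∧
      (∀ σ σ' : (seqGame X n le_rfl).Strat,
        (seqGame X n le_rfl).best PUnit.unit q σ σ' ↔ seqBR X q (e σ) (e σ')) := by
  let e : (seqGame X n le_rfl).Strat ≃ SeqStrat X := seqGameStratEquiv X n le_rfl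
  refine ⟨e, fun p => ?_, fun p p' => ?_⟩
  · obtain ⟨σ, rfl⟩ := e.symm.surjective p
    rw [e.apply_symm_apply]
    exact seqGame_play_seqGameStrat X σ n le_rfl
  · obtain ⟨σ, rfl⟩ := e.symm.surjective p
    obtain ⟨σ', rfl⟩ := e.symm.surjective p'
    rw [e.apply_symm_apply, e.apply_symm_apply, seqBR]
    simp only [udev, playSeq_update_self]
    exact seqGame_best_seqGameStrat_iff X σ σ' n le_rfl q

/-- the recursively defined open game `G_n` has as strategy
profiles exactly the strategy profiles of the `n`-player sequential game, and for
every outcome function `q` its best response relation `B_{G_n}(*,q)` is the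
classical best response relation of the sequential game, stated via an
equivalence of strategy sets commuting with the play functions. -/
theorem seqGame_best_response (X : Fin n → Type)
    [∀ i, Fintype (X i)] [∀ i, Nonempty (X i)]
    (q : ((j : Fin n) → X j) → Fin n → ℝ) :
    ∃ e : (seqGame X n le_rfl).Strat ≃ SeqStrat X,
      (∀ σ : (seqGame X n le_rfl).Strat,
        (seqGame X n le_rfl).play σ PUnit.unit = playSeq X (e σ)) ∧
      (∀ σ σ' : (seqGame X n le_rfl).Strat,
        (seqGame X n le_rfl).best PUnit.unit q σ σ' ↔ seqBR X q (e σ) (e σ')) :=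
  seqGame_best_response_general X q
end
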